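/- Dispersion-optimal linear estimator, case 0 < α ≤ 1: let α ∈ (0,1], γ₁, γ₂ > 0, and real coefficients a₁₁, a₁₂, a₂₁, a₂₂ with a₂₁ ≠ 0, a₂₂ ≠ 0 and a₁₁a₂₂ − a₁₂a₂₁ ≠ 0. Define f : ℝ → ℝ by f(a) = |a₂₁a − a₁₁|^α γ₁^α + |a₂₂a − a₁₂|^α γ₂^α, and set k₁ = a₁₁/a₂₁, k₂ = a₁₂/a₂₂. Then: (i) if |a₂₁|γ₁ > |a₂₂|γ₂ then f(k₁) ≤ f(a) for all a ∈ ℝ; (ii) if |a₂₁|γ₁ < |a₂₂|γ₂ then f(k₂) ≤ f(a) for all a ∈ ℝ; (iii) if |a₂₁|γ₁ = |a₂₂|γ₂ then f(k₁) = f(k₂) ≤ f(a) for all a ∈ ℝ. -/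

import Mathlib

open Real

/-! For `0 < α ≤ 1` the map `t ↦ |t| ^ α` is subadditive, so `|a - k| ^ α` satisfies the triangle
inequality. After factoring `|a₂₁ a - a₁₁| = |a₂₁| |a - k₁|` and `|a₂₂ a - a₁₂| = |a₂₂| |a - k₂|`,
`f` is a weighted sum of the two "distances" `|a - k₁| ^ α` and `|a - k₂| ^ α` with weights
`(|a₂₁| γ₁) ^ α` and `(|a₂₂| γ₂) ^ α`; sitting at the centre of larger weight costs the smaller
weight times `|k₁ - k₂| ^ α`, which by the triangle inequality is at most `f a`. -/

lemma Real.abs_add_rpow_le {α : ℝ} (hα₀ : 0 ≤ α) (hα₁ : α ≤ 1) (x y : ℝ) :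
    |x + y| ^ α ≤ |x| ^ α + |y| ^ α :=
  calc |x + y| ^ α ≤ (|x| + |y|) ^ α := by gcongr; exact abs_add_le x y
    _ ≤ |x| ^ α + |y| ^ α := rpow_add_le_add_rpow (abs_nonneg x) (abs_nonneg y) hα₀ hα₁

lemma Real.weighted_abs_sub_rpow_le {α u v : ℝ} (hα₀ : 0 ≤ α) (hα₁ : α ≤ 1)
    (hv : 0 ≤ v) (hvu : v ≤ u) (p q a : ℝ) :
    v * |p - q| ^ α ≤ u * |a - p| ^ α + v * |a - q| ^ α :=
  calc v * |p - q| ^ α = v * |(p - a) + (a - q)| ^ α := by rw [sub_add_sub_cancel]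
    _ ≤ v * |a - p| ^ α + v * |a - q| ^ α := by
        rw [abs_sub_comm a p, ← mul_add]
        exact mul_le_mul_of_nonneg_left (abs_add_rpow_le hα₀ hα₁ _ _) hv
    _ ≤ u * |a - p| ^ α + v * |a - q| ^ α := by gcongr

lemma Real.abs_mul_sub_rpow_mul_rpow {c γ : ℝ} (hc : c ≠ 0) (hγ : 0 ≤ γ) (α a d : ℝ) :
    |c * a - d| ^ α * γ ^ α = (|c| * γ) ^ α * |a - d / c| ^ α := by
  have hfactor : c * a - d = c * (a - d / c) := by field_simp
  rw [hfactor, abs_mul, mul_rpow (abs_nonneg _) (abs_nonneg _), mul_rpow (abs_nonneg _) hγ]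
  ring

theorem dispersionOptimal_linear_estimator_alpha_le_one_general
    (α γ₁ γ₂ : ℝ) (hα : α ∈ Set.Ioc (0 : ℝ) 1) (hγ₁ : 0 < γ₁) (hγ₂ : 0 < γ₂)
    (a₁₁ a₁₂ a₂₁ a₂₂ : ℝ) (ha₂₁ : a₂₁ ≠ 0) (ha₂₂ : a₂₂ ≠ 0)
    (f : ℝ → ℝ)
    (hf : f = fun a => |a₂₁ * a - a₁₁| ^ α * γ₁ ^ α + |a₂₂ * a - a₁₂| ^ α * γ₂ ^ α)
    (k₁ k₂ : ℝ) (hk₁ : k₁ = a₁₁ / a₂₁) (hk₂ : k₂ = a₁₂ / a₂₂) :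
    (|a₂₁| * γ₁ > |a₂₂| * γ₂ → ∀ a : ℝ, f k₁ ≤ f a) ∧
    (|a₂₁| * γ₁ < |a₂₂| * γ₂ → ∀ a : ℝ, f k₂ ≤ f a) ∧
    (|a₂₁| * γ₁ = |a₂₂| * γ₂ → f k₁ = f k₂ ∧ ∀ a : ℝ, f k₁ ≤ f a) := by
  obtain ⟨hα₀, hα₁⟩ := hα
  set A := |a₂₁| * γ₁
  set B := |a₂₂| * γ₂
  have hfA : ∀ a, f a = A ^ α * |a - k₁| ^ α + B ^ α * |a - k₂| ^ α := fun a => by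
    subst hf hk₁ hk₂
    exact congr_arg₂ (· + ·) (abs_mul_sub_rpow_mul_rpow ha₂₁ hγ₁.le α a a₁₁)
      (abs_mul_sub_rpow_mul_rpow ha₂₂ hγ₂.le α a a₁₂)
  have hfk₁ : f k₁ = B ^ α * |k₁ - k₂| ^ α := by
    simp [hfA, zero_rpow hα₀.ne']
  have hfk₂ : f k₂ = A ^ α * |k₂ - k₁| ^ α := by
    simp [hfA, zero_rpow hα₀.ne']
  have hmin₁ (hBA : B ≤ A) (a : ℝ) : f k₁ ≤ f a := by
    rw [hfk₁, hfA]
    exact weighted_abs_sub_rpow_le hα₀.le hα₁ (by positivity) (by gcongr) k₁ k₂ a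
  have hmin₂ (hAB : A ≤ B) (a : ℝ) : f k₂ ≤ f a := by
    rw [hfk₂, hfA, add_comm]
    exact weighted_abs_sub_rpow_le hα₀.le hα₁ (by positivity) (by gcongr) k₂ k₁ a
  refine ⟨fun h => hmin₁ h.le, fun h => hmin₂ h.le, fun h => ⟨?_, hmin₁ h.ge⟩⟩
  rw [hfk₁, hfk₂, h, abs_sub_comm]

/-- Dispersion-optimal linear estimator, case `0 < α ≤ 1`: the α-th power of the error
dispersion `f(a) = |a₂₁a − a₁₁|^α γ₁^α + |a₂₂a − a₁₂|^α γ₂^α` is minimized at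
`k₁ = a₁₁/a₂₁` or `k₂ = a₁₂/a₂₂` according to the comparison of `|a₂₁|γ₁` and `|a₂₂|γ₂`. -/
theorem dispersionOptimal_linear_estimator_alpha_le_one
    (α γ₁ γ₂ : ℝ) (hα : α ∈ Set.Ioc (0 : ℝ) 1) (hγ₁ : 0 < γ₁) (hγ₂ : 0 < γ₂)
    (a₁₁ a₁₂ a₂₁ a₂₂ : ℝ) (ha₂₁ : a₂₁ ≠ 0) (ha₂₂ : a₂₂ ≠ 0)
    (hdet : a₁₁ * a₂₂ - a₁₂ * a₂₁ ≠ 0)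
    (f : ℝ → ℝ)
    (hf : f = fun a => |a₂₁ * a - a₁₁| ^ α * γ₁ ^ α + |a₂₂ * a - a₁₂| ^ α * γ₂ ^ α)
    (k₁ k₂ : ℝ) (hk₁ : k₁ = a₁₁ / a₂₁) (hk₂ : k₂ = a₁₂ / a₂₂) :
    (|a₂₁| * γ₁ > |a₂₂| * γ₂ → ∀ a : ℝ, f k₁ ≤ f a) ∧
    (|a₂₁| * γ₁ < |a₂₂| * γ₂ → ∀ a : ℝ, f k₂ ≤ f a) ∧
    (|a₂₁| * γ₁ = |a₂₂| * γ₂ → f k₁ = f k₂ ∧ ∀ a : ℝ, f k₁ ≤ f a) :=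
  dispersionOptimal_linear_estimator_alpha_le_one_general α γ₁ γ₂ hα hγ₁ hγ₂ a₁₁ a₁₂ a₂₁ a₂₂ ha₂₁
    ha₂₂ f hf k₁ k₂ hk₁ hk₂
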